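/- Let λ₁ > 0, λ₂ > 0 with λ₁ ≠ 1, λ₂ ≠ 1, λ₁·λ₂ ≠ 1, and let φ > 0. Then the stress–strength reliability R = ∫₀^∞ f₁(y)·F₂(y) dy, where f₁ is the SMPtW density with parameters (λ₁, φ) and F₂ is the SMPtW cumulative distribution function with parameters (λ₂, φ), equals ((log λ₁)/((λ₁ − 1)(1 − λ₂))) · [ (λ₁λ₂ − 1)/log(λ₁λ₂) − λ₂(λ₁ − 1)/log(λ₁) ]. -/

import Mathlib

/-!
The substitution `u = exp (-y ^ φ)` maps `(0, ∞)` onto `(0, 1)` with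
`du = -φ y ^ (φ - 1) exp (-y ^ φ) dy`, and turns `f₁ F₂ dy` into
`log λ₁ / ((λ₁ - 1) (1 - λ₂)) · ((λ₁ λ₂) ^ u - λ₂ λ₁ ^ u) du`, which integrates in closed form.
-/

open Real MeasureTheory

/-- The SMPtW probability density function with parameters `lam > 0`, `lam ≠ 1`, `phi > 0`. -/
noncomputable def smptwPDF (lam phi y : ℝ) : ℝ :=
  (Real.log lam * phi * y ^ (phi - 1) *
    Real.exp (Real.log lam * Real.exp (-(y ^ phi)) - y ^ phi)) / (lam - 1)

/-- The SMPtW cumulative distribution function. -/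
noncomputable def smptwCDF (lam phi y : ℝ) : ℝ :=
  (Real.exp (Real.log lam * Real.exp (-(y ^ phi))) - lam) / (1 - lam)

open Set

theorem integral_exp_const_mul {a b c : ℝ} (hc : c ≠ 0) :
    ∫ x in a..b, exp (c * x) = (exp (c * b) - exp (c * a)) / c := by
  rw [intervalIntegral.integral_comp_mul_left (fun x => exp x) hc, integral_exp, smul_eq_mul,
    inv_mul_eq_div]

noncomputable def weibullSF (phi y : ℝ) : ℝ := exp (-(y ^ phi))

section WeibullSF

variable {phi : ℝ}

theorem hasDerivAt_weibullSF {y : ℝ} (hy : 0 < y) :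
    HasDerivAt (weibullSF phi) (-(phi * y ^ (phi - 1) * weibullSF phi y)) y := by
  refine ((hasDerivAt_rpow_const (p := phi) (Or.inl hy.ne')).fun_neg.exp).congr_deriv ?_
  rw [weibullSF]
  ring

theorem strictAntiOn_weibullSF (hphi : 0 < phi) : StrictAntiOn (weibullSF phi) (Ici 0) :=
  fun _ hx _ _ hxy => exp_lt_exp.2 <| neg_lt_neg <| rpow_lt_rpow hx hxy hphi

theorem weibullSF_image_Ioi (hphi : 0 < phi) : weibullSF phi '' Ioi 0 = Ioo 0 1 := by
  ext u
  constructor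
  · rintro ⟨y, hy, rfl⟩
    exact ⟨exp_pos _, exp_lt_one_iff.2 <| neg_lt_zero.2 <| rpow_pos_of_pos hy _⟩
  · rintro ⟨hu0, hu1⟩
    have hlog : 0 < -log u := neg_pos.2 (log_neg hu0 hu1)
    refine ⟨(-log u) ^ phi⁻¹, rpow_pos_of_pos hlog _, ?_⟩
    rw [weibullSF, rpow_inv_rpow hlog.le hphi.ne', neg_neg, exp_log hu0]

theorem integral_Ioi_weibull_mul_comp_weibullSF (hphi : 0 < phi) (g : ℝ → ℝ) :
    ∫ y in Ioi 0, phi * y ^ (phi - 1) * weibullSF phi y * g (weibullSF phi y) =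
      ∫ u in (0)..1, g u := by
  have hderiv (y : ℝ) (hy : y ∈ Ioi 0) : HasDerivWithinAt (weibullSF phi)
      (-(phi * y ^ (phi - 1) * weibullSF phi y)) (Ioi 0) y :=
    (hasDerivAt_weibullSF hy).hasDerivWithinAt
  have hinj : InjOn (weibullSF phi) (Ioi 0) :=
    ((strictAntiOn_weibullSF hphi).mono Ioi_subset_Ici_self).injOn
  rw [intervalIntegral.integral_of_le zero_le_one, integral_Ioc_eq_integral_Ioo,
    ← weibullSF_image_Ioi hphi,
    integral_image_eq_integral_abs_deriv_smul measurableSet_Ioi hderiv hinj]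
  refine setIntegral_congr_fun measurableSet_Ioi fun y (hy : 0 < y) => ?_
  have hdensity : 0 ≤ phi * y ^ (phi - 1) * weibullSF phi y := by
    unfold weibullSF; positivity
  rw [abs_neg, abs_of_nonneg hdensity, smul_eq_mul]

end WeibullSF

theorem smptwPDF_mul_smptwCDF (lam1 lam2 phi y : ℝ) :
    smptwPDF lam1 phi y * smptwCDF lam2 phi y =
      phi * y ^ (phi - 1) * weibullSF phi y *
        (log lam1 / ((lam1 - 1) * (1 - lam2)) *
          (exp ((log lam1 + log lam2) * weibullSF phi y) -
            lam2 * exp (log lam1 * weibullSF phi y))) := by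
  rw [div_mul_eq_div_div]
  simp only [smptwPDF, smptwCDF, weibullSF, add_mul, sub_eq_add_neg, exp_add]
  ring

theorem smptw_stress_strength_general (lam1 lam2 phi : ℝ)
    (hlam1 : 0 < lam1) (hlam2 : 0 < lam2)
    (hne1 : lam1 ≠ 1) (hne12 : lam1 * lam2 ≠ 1)
    (hphi : 0 < phi) :
    ∫ y in Set.Ioi (0 : ℝ), smptwPDF lam1 phi y * smptwCDF lam2 phi y =
      (Real.log lam1 / ((lam1 - 1) * (1 - lam2))) *
        ((lam1 * lam2 - 1) / Real.log (lam1 * lam2) -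
          lam2 * (lam1 - 1) / Real.log lam1) := by
  have hlog1 : log lam1 ≠ 0 := log_ne_zero_of_pos_of_ne_one hlam1 hne1
  have hlog12 : log (lam1 * lam2) ≠ 0 := log_ne_zero_of_pos_of_ne_one (mul_pos hlam1 hlam2) hne12
  simp_rw [smptwPDF_mul_smptwCDF, ← log_mul hlam1.ne' hlam2.ne']
  rw [integral_Ioi_weibull_mul_comp_weibullSF hphi fun u => log lam1 / ((lam1 - 1) * (1 - lam2)) *
      (exp (log (lam1 * lam2) * u) - lam2 * exp (log lam1 * u)),
    intervalIntegral.integral_const_mul,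
    intervalIntegral.integral_sub (Continuous.intervalIntegrable (by fun_prop) _ _)
      (Continuous.intervalIntegrable (by fun_prop) _ _),
    intervalIntegral.integral_const_mul, integral_exp_const_mul hlog12,
    integral_exp_const_mul hlog1]
  simp only [mul_one, mul_zero, exp_zero, exp_log hlam1, exp_log (mul_pos hlam1 hlam2)]
  ring

/-- stress–strength reliability for two SMPtW distributions sharing
the same shape parameter `φ`. -/
theorem smptw_stress_strength (lam1 lam2 phi : ℝ)
    (hlam1 : 0 < lam1) (hlam2 : 0 < lam2)
    (hne1 : lam1 ≠ 1) (hne2 : lam2 ≠ 1) (hne12 : lam1 * lam2 ≠ 1)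
    (hphi : 0 < phi) :
    ∫ y in Set.Ioi (0 : ℝ), smptwPDF lam1 phi y * smptwCDF lam2 phi y =
      (Real.log lam1 / ((lam1 - 1) * (1 - lam2))) *
        ((lam1 * lam2 - 1) / Real.log (lam1 * lam2) -
          lam2 * (lam1 - 1) / Real.log lam1) :=
  smptw_stress_strength_general lam1 lam2 phi hlam1 hlam2 hne1 hne12 hphi
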